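/- arXiv:1612.02843 — 5 statements merged into one kernel-verified Lean document; each statement's English description precedes it below -/
import Mathlib

section
/- Let G be a finite connected graph of order n ≥ 2 and let r ≥ 1 be an integer. Then the strong resolving graph G_SR is isomorphic to the star K_{1,r} if and only if G is isomorphic to the path P_n and r = 1. -/
/-!
Given `u ≠ v`, among the vertices `x` such that `u` lies on a geodesic from `v` to `x`, one
farthest from `v` is maximally distant from `v`; it therefore has an MMD partner, and it is
strictly closer to `u` than to `v`.

If `G_SR` is a star with centre `c`, every MMD pair contains `c`, and this forces every vertex
maximally distant from `c` to be a fixed vertex `L` farthest from `c`. Hence all leaves coincide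
(`r = 1`) and every MMD pair is `{c, L}`; by the first remark `u ↦ d(c, u)` is then injective,
which makes `G` the path numbered by distance from `c`. Conversely, the boundary of a path
consists of its two ends, and they are mutually maximally distant.
-/

open SimpleGraph

variable {V : Type*}

/-- `u` is maximally distant from `v` in `G`: every neighbor `w` of `u`
satisfies `d(v,w) ≤ d(v,u)`. -/
def MaxDistant (G : SimpleGraph V) (u v : V) : Prop :=
  ∀ w, G.Adj u w → G.dist v w ≤ G.dist v u

/-- `u` and `v` are mutually maximally distant in `G`. -/
def MMD (G : SimpleGraph V) (u v : V) : Prop :=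
  MaxDistant G u v ∧ MaxDistant G v u

/-- The boundary of `G`: vertices maximally distant from some vertex. -/
def boundary (G : SimpleGraph V) : Set V := {u | ∃ v, MaxDistant G u v}

/-- The strong resolving graph on the whole vertex set (`G_{SR+I}`):
two vertices are adjacent iff they are distinct and mutually maximally distant. -/
def srGraphI (G : SimpleGraph V) : SimpleGraph V where
  Adj u v := u ≠ v ∧ MMD G u v
  symm := by
    constructor
    rintro u v ⟨hne, h1, h2⟩
    exact ⟨hne.symm, h2, h1⟩
  loopless := by
    constructor
    rintro u ⟨hne, _⟩
    exact hne rfl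

/-- The strong resolving graph `G_SR`, with vertex set the boundary of `G`. -/
def srGraph (G : SimpleGraph V) : SimpleGraph (boundary G) :=
  (srGraphI G).induce (boundary G)

/-- `u` and `v` are true twins: distinct vertices with equal closed neighborhoods. -/
def TrueTwins (G : SimpleGraph V) (u v : V) : Prop :=
  u ≠ v ∧ insert u (G.neighborSet u) = insert v (G.neighborSet v)

/-- `u` and `v` are false twins: distinct vertices with equal open neighborhoods. -/
def FalseTwins (G : SimpleGraph V) (u v : V) : Prop :=
  u ≠ v ∧ G.neighborSet u = G.neighborSet v

/-- A vertex is simplicial if its neighborhood induces a complete graph. -/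
def IsSimplicial (G : SimpleGraph V) (v : V) : Prop :=
  ∀ a b, G.Adj v a → G.Adj v b → a ≠ b → G.Adj a b

/-- `w` strongly resolves `u` and `v`. -/
def StronglyResolves (G : SimpleGraph V) (w u v : V) : Prop :=
  G.dist w u = G.dist w v + G.dist v u ∨ G.dist w v = G.dist w u + G.dist u v

/-- `S` is a strong metric generator for `G`. -/
def IsStrongMetricGenerator (G : SimpleGraph V) (S : Set V) : Prop :=
  ∀ u v : V, u ≠ v → ∃ w ∈ S, StronglyResolves G w u v

/-- The strong metric dimension of `G`. -/
noncomputable def sdim (G : SimpleGraph V) : ℕ :=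
  sInf {n | ∃ S : Set V, S.ncard = n ∧ IsStrongMetricGenerator G S}

/-- `S` is a vertex cover of `H`. -/
def IsVertexCover (H : SimpleGraph V) (S : Set V) : Prop :=
  ∀ u v : V, H.Adj u v → u ∈ S ∨ v ∈ S

/-- The vertex cover number of `H`. -/
noncomputable def vertexCoverNumber (H : SimpleGraph V) : ℕ :=
  sInf {n | ∃ S : Set V, S.ncard = n ∧ _root_.IsVertexCover H S}

/-- The graph `G*`: distinct vertices adjacent iff at distance at least two
or true twins. -/
def GStar (G : SimpleGraph V) : SimpleGraph V where
  Adj u v := u ≠ v ∧ (2 ≤ G.dist u v ∨ TrueTwins G u v)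
  symm := by
    constructor
    rintro u v ⟨hne, h | h⟩
    · exact ⟨hne.symm, Or.inl (by rwa [G.dist_comm])⟩
    · exact ⟨hne.symm, Or.inr ⟨h.1.symm, h.2.symm⟩⟩
  loopless := by
    constructor
    rintro u ⟨hne, _⟩
    exact hne rfl

/-- The direct (tensor) product of two graphs. -/
def DirectProd {α β : Type*} (G : SimpleGraph α) (H : SimpleGraph β) :
    SimpleGraph (α × β) where
  Adj x y := G.Adj x.1 y.1 ∧ H.Adj x.2 y.2
  symm := ⟨fun _ _ h => ⟨h.1.symm, h.2.symm⟩⟩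
  loopless := ⟨fun x h => G.loopless.irrefl x.1 h.1⟩

/-- The strong product of two graphs. -/
def StrongProd {α β : Type*} (G : SimpleGraph α) (H : SimpleGraph β) :
    SimpleGraph (α × β) where
  Adj x y := x ≠ y ∧ (x.1 = y.1 ∨ G.Adj x.1 y.1) ∧ (x.2 = y.2 ∨ H.Adj x.2 y.2)
  symm := by
    constructor
    rintro x y ⟨hne, h1, h2⟩
    exact ⟨hne.symm, h1.imp Eq.symm Adj.symm, h2.imp Eq.symm Adj.symm⟩
  loopless := by
    constructor
    rintro x ⟨hne, _⟩
    exact hne rfl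

/-- The Cartesian sum (disjunctive product) of two graphs. -/
def CartSum {α β : Type*} (G : SimpleGraph α) (H : SimpleGraph β) :
    SimpleGraph (α × β) where
  Adj x y := G.Adj x.1 y.1 ∨ H.Adj x.2 y.2
  symm := ⟨fun _ _ h => h.imp Adj.symm Adj.symm⟩
  loopless := ⟨fun x h => h.elim (G.loopless.irrefl x.1) (H.loopless.irrefl x.2)⟩

/-- The lexicographic product of two graphs. -/
def LexProd {α β : Type*} (G : SimpleGraph α) (H : SimpleGraph β) :
    SimpleGraph (α × β) where
  Adj x y := G.Adj x.1 y.1 ∨ (x.1 = y.1 ∧ H.Adj x.2 y.2)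
  symm := ⟨fun _ _ h => h.imp Adj.symm (fun h => ⟨h.1.symm, h.2.symm⟩)⟩
  loopless := ⟨fun x h => h.elim (G.loopless.irrefl x.1) (fun h => H.loopless.irrefl x.2 h.2)⟩

/-- The disjoint union of `n` copies of the complete graph on `m` vertices. -/
def CopiesComplete (n m : ℕ) : SimpleGraph (Fin n × Fin m) where
  Adj x y := x.1 = y.1 ∧ x.2 ≠ y.2
  symm := ⟨fun _ _ h => ⟨h.1.symm, h.2.symm⟩⟩
  loopless := ⟨fun x h => h.2 rfl⟩

/-- Every pair of vertices lies on a common cycle of length five. -/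
def C5Connected (G : SimpleGraph V) : Prop :=
  ∀ u v : V, ∃ (w : V) (c : G.Walk w w), c.IsCycle ∧ c.length = 5 ∧
    u ∈ c.support ∧ v ∈ c.support


section Metric

variable {G : SimpleGraph V}

lemma SimpleGraph.Adj.dist_le_dist_add_one {x y : V} (h : G.Adj x y) (u : V) :
    G.dist u y ≤ G.dist u x + 1 := by
  rcases h.diff_dist_adj (u := u) with h | h | h <;> omega

lemma SimpleGraph.Connected.exists_adj_dist_add_one_eq (hG : G.Connected) {u v : V}
    (h : u ≠ v) : ∃ w, G.Adj u w ∧ G.dist w v + 1 = G.dist u v := by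
  obtain ⟨p, hp⟩ := hG.exists_walk_length_eq_dist u v
  cases p with
  | nil => exact absurd rfl h
  | @cons _ w _ hadj q =>
    have hle : G.dist w v ≤ q.length := dist_le q
    have hge := hadj.symm.dist_le_dist_add_one v
    rw [dist_comm, dist_comm (u := v)] at hge
    exact ⟨w, hadj, by simp only [Walk.length_cons] at hp; omega⟩

lemma SimpleGraph.Iso.dist_le {W : Type*} {H : SimpleGraph W} (φ : G ≃g H) (u v : V) :
    H.dist (φ u) (φ v) ≤ G.dist u v := by
  by_cases hr : G.Reachable u v
  · obtain ⟨p, hp⟩ := hr.exists_walk_length_eq_dist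
    exact hp ▸ p.length_map φ.toHom ▸ SimpleGraph.dist_le _
  · rw [dist_eq_zero_of_not_reachable (mt φ.reachable_iff.mp hr)]
    exact Nat.zero_le _

lemma SimpleGraph.Iso.dist_eq {W : Type*} {H : SimpleGraph W} (φ : G ≃g H) (u v : V) :
    H.dist (φ u) (φ v) = G.dist u v :=
  (φ.dist_le u v).antisymm (by simpa using φ.symm.dist_le (φ u) (φ v))

end Metric

section MaxDistant

variable {G : SimpleGraph V}

lemma MMD.symm {x y : V} (h : MMD G x y) : MMD G y x := ⟨h.2, h.1⟩

lemma isIsolated_of_maxDistant_self {x : V} (h : MaxDistant G x x) : G.IsIsolated x :=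
  fun w hw => by simpa [dist_eq_one_iff_adj.mpr hw] using h w hw

lemma MMD.ne [Nontrivial V] (hG : G.Preconnected) {x y : V} (h : MMD G x y) : x ≠ y := by
  rintro rfl
  exact hG.not_isIsolated x (isIsolated_of_maxDistant_self h.1)

lemma SimpleGraph.Iso.maxDistant_iff {W : Type*} {H : SimpleGraph W} (φ : G ≃g H) {u v : V} :
    MaxDistant H (φ u) (φ v) ↔ MaxDistant G u v := by
  refine ⟨fun h w hw => ?_, fun h w hw => ?_⟩
  · simpa only [φ.dist_eq] using h (φ w) (φ.map_rel_iff.mpr hw)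
  · obtain ⟨w, rfl⟩ := φ.surjective w
    simpa only [φ.dist_eq] using h w (φ.map_rel_iff.mp hw)

lemma exists_maxDistant_dist_eq_add [Finite V] (hG : G.Connected) (v w : V) :
    ∃ x, MaxDistant G x v ∧ G.dist v x = G.dist v w + G.dist w x := by
  obtain ⟨x, hx, hmax⟩ := Set.exists_max_image {x | G.dist v x = G.dist v w + G.dist w x}
    (G.dist v) (Set.toFinite _) ⟨w, by simp⟩
  change G.dist v x = G.dist v w + G.dist w x at hx
  refine ⟨x, fun x' hxx' => ?_, hx⟩
  by_contra! hlt
  have h1 := hxx'.dist_le_dist_add_one v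
  have h2 := hxx'.dist_le_dist_add_one w
  have h3 : G.dist v x' ≤ G.dist v w + G.dist w x' := hG.dist_triangle
  have h4 := hmax x' (show G.dist v x' = G.dist v w + G.dist w x' by omega)
  omega

lemma MaxDistant.exists_mmd [Finite V] (hG : G.Connected) {x v : V} (hx : MaxDistant G x v) :
    ∃ y, MMD G x y ∧ G.dist x y = G.dist x v + G.dist v y := by
  obtain ⟨y, hy, hxy⟩ := exists_maxDistant_dist_eq_add hG x v
  refine ⟨y, ⟨fun x' hxx' => ?_, hy⟩, hxy⟩
  have h1 : G.dist y x' ≤ G.dist y v + G.dist v x' := hG.dist_triangle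
  have h2 := hx x' hxx'
  have e1 : G.dist y v = G.dist v y := dist_comm
  have e2 : G.dist y x = G.dist x y := dist_comm
  have e3 : G.dist v x = G.dist x v := dist_comm
  omega

lemma exists_mmd_dist_lt_dist [Finite V] (hG : G.Connected) {u v : V} (huv : u ≠ v) :
    ∃ x y, MMD G x y ∧ G.dist u x < G.dist v x := by
  obtain ⟨x, hx, hvx⟩ := exists_maxDistant_dist_eq_add hG v u
  obtain ⟨y, hxy, -⟩ := hx.exists_mmd hG
  have : 0 < G.dist v u := hG.pos_dist_of_ne huv.symm
  exact ⟨x, y, hxy, by omega⟩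

lemma injective_dist_of_mmd_mem_pair [Finite V] (hG : G.Connected) {a b : V}
    (hab : ∀ x y, MMD G x y → x = a ∨ x = b) : Function.Injective (G.dist a) := by
  have key : ∀ u v, G.dist a u = G.dist a v → u ≠ v → G.dist u b < G.dist v b := by
    intro u v he huv
    obtain ⟨x, y, hxy, hlt⟩ := exists_mmd_dist_lt_dist hG huv
    rcases hab x y hxy with rfl | rfl
    · rw [dist_comm, he, dist_comm] at hlt
      exact absurd hlt (lt_irrefl _)
    · exact hlt
  intro u v he
  by_contra huv
  exact lt_asymm (key u v he huv) (key v u he.symm (Ne.symm huv))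

lemma adj_of_dist_add_one_eq (hG : G.Connected) {a u v : V}
    (ha : Function.Injective (G.dist a)) (h : G.dist a u + 1 = G.dist a v) : G.Adj u v := by
  have hva : v ≠ a := by rintro rfl; simp at h
  obtain ⟨w, hvw, hwa⟩ := hG.exists_adj_dist_add_one_eq hva
  have e1 : G.dist w a = G.dist a w := dist_comm
  have e2 : G.dist v a = G.dist a v := dist_comm
  obtain rfl : w = u := ha (by omega)
  exact hvw.symm

lemma SimpleGraph.Connected.nonempty_iso_pathGraph [Fintype V] (hG : G.Connected) {a : V}
    (ha : Function.Injective (G.dist a)) : Nonempty (G ≃g pathGraph (Fintype.card V)) := by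
  have hlt : ∀ v, G.dist a v < Fintype.card V := fun v => by
    obtain ⟨p, hp, hl⟩ := hG.exists_path_of_dist a v
    exact hl ▸ hp.length_lt
  let f : V → Fin (Fintype.card V) := fun v => ⟨G.dist a v, hlt v⟩
  have hf : Function.Bijective f := (Fintype.bijective_iff_injective_and_card f).mpr
    ⟨fun u v h => ha (congrArg Fin.val h), (Fintype.card_fin _).symm⟩
  refine ⟨⟨Equiv.ofBijective f hf, fun {u v} => ?_⟩⟩
  simp only [Equiv.ofBijective_apply, pathGraph_adj, f]
  refine ⟨fun h => h.elim (adj_of_dist_add_one_eq hG ha)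
    fun h => (adj_of_dist_add_one_eq hG ha h).symm, fun h => ?_⟩
  have hne : G.dist a u ≠ G.dist a v := fun he => h.ne (ha he)
  rcases h.diff_dist_adj (u := a) with h' | h' | h' <;> omega

lemma eq_of_maxDistant_of_mmd_cover [Finite V] (hG : G.Connected) {c L l : V}
    (hcover : ∀ x y, MMD G x y → x = c ∨ y = c) (hL : ∀ v, G.dist c v ≤ G.dist c L)
    (hl : MaxDistant G l c) : l = L := by
  by_contra hne
  obtain ⟨x, hx, hLx⟩ := exists_maxDistant_dist_eq_add hG L l
  obtain ⟨y, hxy, hxy'⟩ := hx.exists_mmd hG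
  have hpos : 0 < G.dist L l := hG.pos_dist_of_ne (Ne.symm hne)
  have e1 : G.dist L l = G.dist l L := dist_comm
  have e2 : G.dist L c = G.dist c L := dist_comm
  -- `l` lies on a geodesic from `L` to `x`, and `L` on one from `x` to `y`: so `c = x`
  -- contradicts `MaxDistant G l c`, and `c = y` makes `x` farther from `c` than `L`.
  rcases hcover x y hxy with rfl | rfl
  · obtain ⟨w, hlw, hwL⟩ := hG.exists_adj_dist_add_one_eq hne
    have h1 : G.dist x L ≤ G.dist x w + G.dist w L := hG.dist_triangle
    have h2 := hl w hlw
    have e3 : G.dist l x = G.dist x l := dist_comm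
    omega
  · have h1 := hL x
    have e3 : G.dist x L = G.dist L x := dist_comm
    have e4 : G.dist x y = G.dist y x := dist_comm
    omega

end MaxDistant

section SrGraphStar

variable {G : SimpleGraph V} {β : Type*}

lemma completeBipartiteGraph_fin_one_adj {p q : Fin 1 ⊕ β}
    (h : (completeBipartiteGraph (Fin 1) β).Adj p q) : p = Sum.inl 0 ∨ q = Sum.inl 0 := by
  rcases p with i | i <;> rcases q with j | j <;> simp_all [Fin.fin_one_eq_zero]

lemma srGraphI_adj_eq_center (ψ : srGraph G ≃g completeBipartiteGraph (Fin 1) β) {x y : V}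
    (h : (srGraphI G).Adj x y) :
    x = (ψ.symm (Sum.inl 0)).val ∨ y = (ψ.symm (Sum.inl 0)).val := by
  have hxy : (srGraph G).Adj ⟨x, y, h.2.1⟩ ⟨y, x, h.2.2⟩ := h
  refine (completeBipartiteGraph_fin_one_adj (ψ.map_rel_iff.mpr hxy)).imp ?_ ?_ <;>
    exact fun he => congrArg Subtype.val (ψ.symm_apply_eq.mpr he.symm).symm

lemma srGraphI_adj_center_leaf (ψ : srGraph G ≃g completeBipartiteGraph (Fin 1) β) (i : β) :
    (srGraphI G).Adj (ψ.symm (Sum.inl 0)) (ψ.symm (Sum.inr i)) :=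
  ψ.symm.map_rel_iff.mpr (by simp [completeBipartiteGraph])

lemma SimpleGraph.Connected.nonempty_iso_pathGraph_of_srGraph_iso_star [Fintype V]
    [Nontrivial V] (hG : G.Connected) (ψ : srGraph G ≃g completeBipartiteGraph (Fin 1) β) :
    Nonempty (G ≃g pathGraph (Fintype.card V)) ∧ Subsingleton β := by
  set c := (ψ.symm (Sum.inl 0)).val
  have hcover : ∀ x y, MMD G x y → x = c ∨ y = c :=
    fun x y h => srGraphI_adj_eq_center ψ ⟨h.ne hG.preconnected, h⟩
  obtain ⟨L, hL⟩ := Finite.exists_max (G.dist c)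
  have hfar : ∀ {l}, MaxDistant G l c → l = L := eq_of_maxDistant_of_mmd_cover hG hcover hL
  have hpair : ∀ x y, MMD G x y → x = c ∨ x = L :=
    fun x y h => (hcover x y h).imp_right fun (hy : y = c) => hfar (hy ▸ h.1)
  have hleaf : ∀ i, (ψ.symm (Sum.inr i)).val = L :=
    fun i => hfar (srGraphI_adj_center_leaf ψ i).2.2
  refine ⟨hG.nonempty_iso_pathGraph (injective_dist_of_mmd_mem_pair hG hpair), ⟨fun i j => ?_⟩⟩
  exact Sum.inr_injective (ψ.symm.injective (Subtype.ext ((hleaf i).trans (hleaf j).symm)))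

end SrGraphStar

section PathGraph

variable {n : ℕ}

lemma pathGraph_walk_length_ge {i j : Fin n} (p : (pathGraph n).Walk i j) :
    j.val - i.val + (i.val - j.val) ≤ p.length := by
  induction p with
  | nil => simp
  | cons hadj _ ih =>
    rw [pathGraph_adj] at hadj
    simp only [Walk.length_cons]
    omega

lemma pathGraph_dist_le_of_add_eq : ∀ (k : ℕ) {i j : Fin n}, i.val + k = j.val →
    (pathGraph n).dist i j ≤ k
  | 0, i, j, h => by simp [Fin.ext (by omega : i.val = j.val)]
  | k + 1, i, j, h => by
    have hadj : (pathGraph n).Adj i ⟨i.val + 1, by omega⟩ := pathGraph_adj.mpr (Or.inl rfl)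
    have h1 := hadj.reachable.dist_triangle_left j
    have h2 := pathGraph_dist_le_of_add_eq k (i := ⟨i.val + 1, by omega⟩) (j := j)
      (by simp; omega)
    rw [dist_eq_one_iff_adj.mpr hadj] at h1
    omega

lemma pathGraph_dist (i j : Fin n) :
    (pathGraph n).dist i j = j.val - i.val + (i.val - j.val) := by
  refine le_antisymm ?_ ?_
  · rcases le_total i.val j.val with h | h
    · exact (pathGraph_dist_le_of_add_eq (j.val - i.val) (by omega)).trans (by omega)
    · rw [SimpleGraph.dist_comm]
      exact (pathGraph_dist_le_of_add_eq (i.val - j.val) (by omega)).trans (by omega)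
  · obtain ⟨p, hp⟩ := (pathGraph_preconnected n i j).exists_walk_length_eq_dist
    exact hp ▸ pathGraph_walk_length_ge p

lemma pathGraph_mmd_zero_last (hn : 2 ≤ n) :
    MMD (pathGraph n) ⟨0, by omega⟩ ⟨n - 1, by omega⟩ := by
  refine ⟨fun w hw => ?_, fun w hw => ?_⟩ <;>
  · rw [pathGraph_adj] at hw
    simp only [pathGraph_dist] at hw ⊢
    omega

lemma pathGraph_mem_boundary {u : Fin n} (hu : u ∈ boundary (pathGraph n)) :
    u.val = 0 ∨ u.val = n - 1 := by
  obtain ⟨v, hv⟩ := hu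
  by_contra! h
  rcases le_total v.val u.val with hvu | hvu
  · have := hv ⟨u.val + 1, by omega⟩ (pathGraph_adj.mpr (Or.inl rfl))
    simp only [pathGraph_dist] at this
    omega
  · have := hv ⟨u.val - 1, by omega⟩ (pathGraph_adj.mpr (Or.inr (by simp; omega)))
    simp only [pathGraph_dist] at this
    omega

end PathGraph

section SrGraphOfPath

variable {G : SimpleGraph V}

lemma completeBipartiteGraph_fin_one_fin_one : completeBipartiteGraph (Fin 1) (Fin 1) = ⊤ := by
  ext p q
  rcases p with i | i <;> rcases q with j | j <;> simp [Fin.fin_one_eq_zero]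

lemma srGraph_eq_top_of_boundary_subset_pair {a b : V} (hab : MMD G a b)
    (hbd : ∀ u ∈ boundary G, u = a ∨ u = b) : srGraph G = ⊤ := by
  ext ⟨u, hu⟩ ⟨v, hv⟩
  refine ⟨fun h => h.ne, fun huv => ?_⟩
  have huv' : u ≠ v := fun h => huv (Subtype.ext h)
  refine ⟨huv', ?_⟩
  rcases hbd u hu with rfl | rfl <;> rcases hbd v hv with rfl | rfl
  exacts [absurd rfl huv', hab, hab.symm, absurd rfl huv']

lemma nonempty_srGraph_iso_of_boundary_subset_pair {a b : V} (hne : a ≠ b) (hab : MMD G a b)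
    (hbd : ∀ u ∈ boundary G, u = a ∨ u = b) :
    Nonempty (srGraph G ≃g completeBipartiteGraph (Fin 1) (Fin 1)) := by
  have hB : boundary G = {a, b} := Set.Subset.antisymm hbd (by
    rintro u (rfl | rfl)
    exacts [⟨b, hab.1⟩, ⟨a, hab.2⟩])
  have : Finite (boundary G) := hB ▸ inferInstance
  obtain ⟨e⟩ := Finite.card_eq.mp (show Nat.card (boundary G) = Nat.card (Fin 1 ⊕ Fin 1) by
    rw [Nat.card_coe_set_eq, hB, Set.ncard_pair hne]; simp)
  rw [srGraph_eq_top_of_boundary_subset_pair hab hbd, completeBipartiteGraph_fin_one_fin_one]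
  exact ⟨Iso.completeGraph e⟩

lemma nonempty_srGraph_iso_of_iso_pathGraph {n : ℕ} (hn : 2 ≤ n) (φ : G ≃g pathGraph n) :
    Nonempty (srGraph G ≃g completeBipartiteGraph (Fin 1) (Fin 1)) := by
  set a := φ.symm ⟨0, by omega⟩
  set b := φ.symm ⟨n - 1, by omega⟩
  have hab : MMD G a b :=
    ⟨φ.maxDistant_iff.mp (by simpa [a, b] using (pathGraph_mmd_zero_last hn).1),
      φ.maxDistant_iff.mp (by simpa [a, b] using (pathGraph_mmd_zero_last hn).2)⟩
  refine nonempty_srGraph_iso_of_boundary_subset_pair (fun h => by simp [a, b] at h; omega) hab ?_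
  rintro u ⟨v, hv⟩
  rcases pathGraph_mem_boundary ⟨φ v, φ.maxDistant_iff.mpr hv⟩ with h | h
  · exact Or.inl (φ.symm_apply_eq.mpr (Fin.ext h.symm)).symm
  · exact Or.inr (φ.symm_apply_eq.mpr (Fin.ext h.symm)).symm

end SrGraphOfPath

theorem stmt7 [Fintype V] (G : SimpleGraph V) (hG : G.Connected)
    (hn : 2 ≤ Fintype.card V) (r : ℕ) (hr : 1 ≤ r) :
    Nonempty (srGraph G ≃g completeBipartiteGraph (Fin 1) (Fin r)) ↔
      (Nonempty (G ≃g pathGraph (Fintype.card V)) ∧ r = 1) := by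
  have : Nontrivial V := Fintype.one_lt_card_iff_nontrivial.mp hn
  refine ⟨fun ⟨ψ⟩ => ?_, fun ⟨⟨φ⟩, hr1⟩ => hr1 ▸ nonempty_srGraph_iso_of_iso_pathGraph hn φ⟩
  obtain ⟨hpath, hsub⟩ := hG.nonempty_iso_pathGraph_of_srGraph_iso_star ψ
  exact ⟨hpath, le_antisymm (Fin.subsingleton_iff_le_one.mp hsub) hr⟩
end

section
/- For every integer n ≥ 3 with n ≠ 4, there exists a finite connected graph G such that the strong resolving graph G_SR is isomorphic to the cycle C_n on n vertices. -/
open SimpleGraph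

variable {V : Type*}

/-! In the complement `Hᶜ` of a `d`-regular graph `H` on more than `2d` vertices, the closed
neighbourhoods of two `H`-adjacent vertices never cover everything, so `Hᶜ` has diameter at most
two and its pairs at distance two are exactly the edges of `H`; these pairs are mutually
maximally distant. Conversely, if `u, v` are distinct and not `H`-adjacent, they are adjacent in
`Hᶜ`, and unless they are false twins of `H` some `H`-neighbour `w` of `v` is an `Hᶜ`-neighbour of
`u` at distance two from `v`, so `u` is not maximally distant from `v`. Hence `(Hᶜ)_SR = H`.
The cycle `C_n`, `n ≥ 5`, is `2`-regular without false twins, and `C_3 = K_3` is its own strong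
resolving graph. -/

section DiameterTwo

variable {G : SimpleGraph V} {u v : V}

lemma mmd_of_dist_eq_two (hdiam : ∀ x y, G.dist x y ≤ 2) (h : G.dist u v = 2) : MMD G u v :=
  ⟨fun w _ => (hdiam v w).trans (G.dist_comm.trans h).ge, fun w _ => (hdiam u w).trans h.ge⟩

end DiameterTwo

section Complement

variable [Fintype V] {H : SimpleGraph V} [DecidableRel H.Adj] {d : ℕ} {u v : V}

lemma exists_compl_adj_compl_adj (hdeg : ∀ x, H.degree x ≤ d)
    (hcard : 2 * d < Fintype.card V) (h : H.Adj u v) : ∃ w, Hᶜ.Adj u w ∧ Hᶜ.Adj w v := by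
  classical
  have hlt : (H.neighborFinset u ∪ H.neighborFinset v).card < (Finset.univ : Finset V).card :=
    calc (H.neighborFinset u ∪ H.neighborFinset v).card
        ≤ H.degree u + H.degree v := Finset.card_union_le _ _
      _ ≤ 2 * d := by linarith [hdeg u, hdeg v]
      _ < _ := hcard
  obtain ⟨w, -, hw⟩ := Finset.exists_mem_notMem_of_card_lt_card hlt
  simp only [Finset.mem_union, mem_neighborFinset, not_or] at hw
  exact ⟨w, (H.compl_adj u w).2 ⟨fun hu => hw.2 (hu ▸ h.symm), hw.1⟩,
    (H.compl_adj w v).2 ⟨fun hv => hw.1 (hv ▸ h), fun h' => hw.2 h'.symm⟩⟩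

lemma exists_walk_compl_length_le_two (hdeg : ∀ x, H.degree x ≤ d)
    (hcard : 2 * d < Fintype.card V) (u v : V) : ∃ p : Hᶜ.Walk u v, p.length ≤ 2 := by
  by_cases huv : u = v
  · subst huv
    exact ⟨.nil, by simp⟩
  by_cases hadj : H.Adj u v
  · obtain ⟨w, huw, hwv⟩ := exists_compl_adj_compl_adj hdeg hcard hadj
    exact ⟨.cons huw (.cons hwv .nil), le_rfl⟩
  · exact ⟨((H.compl_adj u v).2 ⟨huv, hadj⟩).toWalk, by simp⟩

lemma connected_compl [Nonempty V] (hdeg : ∀ x, H.degree x ≤ d)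
    (hcard : 2 * d < Fintype.card V) : Hᶜ.Connected :=
  (connected_iff _).2 ⟨fun u v => (exists_walk_compl_length_le_two hdeg hcard u v).elim
    fun p _ => p.reachable, inferInstance⟩

lemma dist_compl_le_two (hdeg : ∀ x, H.degree x ≤ d) (hcard : 2 * d < Fintype.card V)
    (u v : V) : Hᶜ.dist u v ≤ 2 :=
  let ⟨p, hp⟩ := exists_walk_compl_length_le_two hdeg hcard u v
  (dist_le p).trans hp

lemma dist_compl_eq_two (hdeg : ∀ x, H.degree x ≤ d) (hcard : 2 * d < Fintype.card V)
    (h : H.Adj u v) : Hᶜ.dist u v = 2 := by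
  have hreach : Hᶜ.Reachable u v :=
    (exists_walk_compl_length_le_two hdeg hcard u v).elim fun p _ => p.reachable
  have hgt : 1 < Hᶜ.dist u v :=
    hreach.one_lt_dist_of_ne_of_not_adj h.ne fun h' => ((H.compl_adj u v).1 h').2 h
  linarith [dist_compl_le_two hdeg hcard u v]

lemma mmd_compl_of_adj (hdeg : ∀ x, H.degree x ≤ d) (hcard : 2 * d < Fintype.card V)
    (h : H.Adj u v) : MMD Hᶜ u v :=
  mmd_of_dist_eq_two (dist_compl_le_two hdeg hcard) (dist_compl_eq_two hdeg hcard h)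

lemma exists_adj_not_adj_of_not_falseTwins (hreg : H.IsRegularOfDegree d) (hne : u ≠ v)
    (htw : ¬FalseTwins H u v) : ∃ w, H.Adj v w ∧ ¬H.Adj u w := by
  by_contra! hsub
  have hfin : H.neighborFinset v ⊆ H.neighborFinset u := fun w hw => by
    simpa using hsub w (by simpa using hw)
  have heq : H.neighborFinset v = H.neighborFinset u :=
    Finset.eq_of_subset_of_card_le hfin (by rw [card_neighborFinset_eq_degree,
      card_neighborFinset_eq_degree, hreg u, hreg v])
  refine htw ⟨hne, Set.ext fun w => ?_⟩
  simp only [mem_neighborSet, ← mem_neighborFinset, heq]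

lemma not_maxDistant_compl (hreg : H.IsRegularOfDegree d) (hcard : 2 * d < Fintype.card V)
    (hne : u ≠ v) (hnadj : ¬H.Adj u v) (htw : ¬FalseTwins H u v) : ¬MaxDistant Hᶜ u v := by
  intro hmax
  have hdeg : ∀ x, H.degree x ≤ d := fun x => (hreg x).le
  obtain ⟨w, hvw, huw⟩ := exists_adj_not_adj_of_not_falseTwins hreg hne htw
  have hcw : Hᶜ.Adj u w := (H.compl_adj u w).2 ⟨fun h => hnadj (h ▸ hvw.symm), huw⟩
  have hvu : Hᶜ.dist v u = 1 :=
    dist_eq_one_iff_adj.2 ((H.compl_adj v u).2 ⟨hne.symm, fun h => hnadj h.symm⟩)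
  have := hmax w hcw
  rw [hvu, dist_compl_eq_two hdeg hcard hvw] at this
  omega

theorem srGraphI_compl (hreg : H.IsRegularOfDegree d) (hcard : 2 * d < Fintype.card V)
    (htw : ∀ u v, ¬FalseTwins H u v) : srGraphI Hᶜ = H := by
  ext u v
  refine ⟨fun ⟨hne, hmmd⟩ => ?_, fun h => ⟨h.ne, mmd_compl_of_adj (fun x => (hreg x).le) hcard h⟩⟩
  by_contra hnadj
  exact not_maxDistant_compl hreg hcard hne hnadj (htw u v) hmmd.1

end Complement

lemma maxDistant_top {u v : V} (huv : u ≠ v) : MaxDistant ⊤ u v := fun w _ => by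
  classical
  rw [dist_top_of_ne huv.symm, dist_top]
  split_ifs <;> omega

lemma srGraphI_top : srGraphI (⊤ : SimpleGraph V) = ⊤ := by
  ext u v
  exact ⟨fun h => h.1, fun h => ⟨h, maxDistant_top h, maxDistant_top h.symm⟩⟩

def srGraphIsoOfMemBoundary {G : SimpleGraph V} {H : SimpleGraph V}
    (hb : ∀ u, u ∈ boundary G) (h : srGraphI G = H) : srGraph G ≃g H where
  toEquiv := Equiv.subtypeUnivEquiv hb
  map_rel_iff' := by subst h; exact Iff.rfl

lemma cycleGraph_isRegularOfDegree (n : ℕ) : (cycleGraph (n + 3)).IsRegularOfDegree 2 :=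
  fun _ => cycleGraph_degree_three_le

lemma cycleGraph_adj_add_one {n : ℕ} (u : Fin (n + 2)) : (cycleGraph (n + 2)).Adj u (u + 1) :=
  cycleGraph_adj.2 (Or.inr (add_sub_cancel_left u 1))

open Fin.CommRing in
lemma not_falseTwins_cycleGraph {n : ℕ} (hn : n ≠ 1) (u v : Fin (n + 3)) :
    ¬FalseTwins (cycleGraph (n + 3)) u v := by
  rintro ⟨hne, hN⟩
  rw [cycleGraph_neighborSet, cycleGraph_neighborSet, Set.pair_eq_pair_iff] at hN
  rcases hN with ⟨h, -⟩ | ⟨h₁, h₂⟩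
  · exact hne (sub_left_injective h)
  · -- `u = v + 2 = v - 2`
    have h4 : ((4 : ℕ) : Fin (n + 3)) = 0 := by
      push_cast
      linear_combination h₂ - h₁
    have := Nat.le_of_dvd (by norm_num) (Fin.natCast_eq_zero.1 h4)
    obtain rfl : n = 0 := by omega
    exact absurd (Fin.natCast_eq_zero.1 h4) (by decide)

theorem stmt10 (n : ℕ) (hn : 3 ≤ n) (hn4 : n ≠ 4) :
    ∃ (m : ℕ) (G : SimpleGraph (Fin m)), G.Connected ∧
      Nonempty (srGraph G ≃g cycleGraph n) := by
  obtain ⟨k, rfl⟩ : ∃ k, n = k + 3 := ⟨n - 3, by omega⟩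
  rcases Nat.eq_zero_or_pos k with rfl | hk
  · refine ⟨3, ⊤, connected_top, ⟨srGraphIsoOfMemBoundary (fun u => ?_) ?_⟩⟩
    · exact ⟨u + 1, maxDistant_top (cycleGraph_adj_add_one u).ne⟩
    · rw [srGraphI_top, cycleGraph_three_eq_top]
  · have hcard : 2 * 2 < Fintype.card (Fin (k + 3)) := by rw [Fintype.card_fin]; omega
    have hdeg := fun x => ((cycleGraph_isRegularOfDegree k) x).le
    refine ⟨k + 3, (cycleGraph (k + 3))ᶜ, connected_compl hdeg hcard,
      ⟨srGraphIsoOfMemBoundary (fun u => ?_) (srGraphI_compl (cycleGraph_isRegularOfDegree k)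
        hcard (not_falseTwins_cycleGraph (by omega)))⟩⟩
    exact ⟨u + 1, (mmd_compl_of_adj hdeg hcard (cycleGraph_adj_add_one u)).1⟩
end

section
/- For all integers r, t ≥ 3, the strong resolving graph of the direct product K_r × K_t is isomorphic to the Cartesian product K_r □ K_t; that is, (K_r × K_t)_SR ≅ K_r □ K_t. -/
open SimpleGraph

variable {V : Type*}

/- In `K_r × K_t` two vertices are adjacent iff they differ in both coordinates, and any two
vertices have a common neighbour, so distinct non-adjacent vertices are at distance `2`, the
diameter; hence they are mutually maximally distant and every vertex lies in the boundary.
Adjacent vertices `x, y` are never MMD: `(y.1, e)` with `e ∉ {x.2, y.2}` is a neighbour of `x`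
at distance `2` from `y`. So `G_SR` is the complement of `K_r × K_t`, which is `K_r □ K_t`. -/

namespace SimpleGraph

variable {G : SimpleGraph V} {u v w : V}

lemma dist_le_two_of_exists_adj_adj (hG : ∀ u v, ∃ w, G.Adj u w ∧ G.Adj w v) (u v : V) :
    G.dist u v ≤ 2 := by
  obtain ⟨w, huw, hwv⟩ := hG u v
  simpa using dist_le (Walk.cons huw hwv.toWalk)

lemma dist_eq_two_of_exists_adj_adj (hG : ∀ u v, ∃ w, G.Adj u w ∧ G.Adj w v) (hne : u ≠ v)
    (hnadj : ¬G.Adj u v) : G.dist u v = 2 := by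
  obtain ⟨w, huw, hwv⟩ := hG u v
  have hpos : 0 < G.dist u v := (huw.reachable.trans hwv.reachable).pos_dist_of_ne hne
  have hne_one : G.dist u v ≠ 1 := fun h => hnadj (dist_eq_one_iff_adj.mp h)
  have hle := dist_le_two_of_exists_adj_adj hG u v
  omega

lemma not_maxDistant_of_adj (huv : G.Adj u v) (huw : G.Adj u w) (hwv : w ≠ v)
    (hvw : ¬G.Adj v w) : ¬MaxDistant G u v := by
  intro hmax
  have hle : G.dist v w ≤ 1 := (dist_eq_one_iff_adj.mpr huv.symm).symm ▸ hmax w huw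
  have hpos : 0 < G.dist v w := (huv.symm.reachable.trans huw.reachable).pos_dist_of_ne hwv.symm
  exact hvw (dist_eq_one_iff_adj.mp (by omega))

lemma maxDistant_of_not_adj (hG : ∀ u v, ∃ w, G.Adj u w ∧ G.Adj w v) (hne : v ≠ u)
    (hnadj : ¬G.Adj v u) : MaxDistant G u v := fun w _ => by
  rw [dist_eq_two_of_exists_adj_adj hG hne hnadj]
  exact dist_le_two_of_exists_adj_adj hG v w

theorem srGraphI_eq_compl (hG : ∀ u v, ∃ w, G.Adj u w ∧ G.Adj w v)
    (hedge : ∀ u v, G.Adj u v → ∃ w, G.Adj u w ∧ w ≠ v ∧ ¬G.Adj v w) : srGraphI G = Gᶜ := by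
  ext u v
  rw [compl_adj]
  constructor
  · rintro ⟨hne, hmax, -⟩
    refine ⟨hne, fun huv => ?_⟩
    obtain ⟨w, huw, hwv, hvw⟩ := hedge u v huv
    exact not_maxDistant_of_adj huv huw hwv hvw hmax
  · rintro ⟨hne, hnadj⟩
    exact ⟨hne, maxDistant_of_not_adj hG hne.symm (hnadj ∘ Adj.symm),
      maxDistant_of_not_adj hG hne hnadj⟩

theorem boundary_eq_univ (hG : ∀ u v, ∃ w, G.Adj u w ∧ G.Adj w v)
    (hcompl : ∀ u, ∃ v, v ≠ u ∧ ¬G.Adj v u) : boundary G = Set.univ :=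
  Set.eq_univ_of_forall fun u =>
    let ⟨v, hne, hnadj⟩ := hcompl u
    ⟨v, maxDistant_of_not_adj hG hne hnadj⟩

end SimpleGraph

section DirectProdComplete

open SimpleGraph

variable {α β : Type*}

@[simp]
lemma directProd_top_adj {x y : α × β} :
    (DirectProd (⊤ : SimpleGraph α) (⊤ : SimpleGraph β)).Adj x y ↔ x.1 ≠ y.1 ∧ x.2 ≠ y.2 := by
  simp [DirectProd]

lemma directProd_top_exists_adj_adj (hα : 3 ≤ ENat.card α) (hβ : 3 ≤ ENat.card β)
    (x y : α × β) :
    ∃ z, (DirectProd (⊤ : SimpleGraph α) (⊤ : SimpleGraph β)).Adj x z ∧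
      (DirectProd (⊤ : SimpleGraph α) (⊤ : SimpleGraph β)).Adj z y := by
  obtain ⟨a, hax, hay⟩ := ENat.exists_ne_ne_of_three_le hα x.1 y.1
  obtain ⟨b, hbx, hby⟩ := ENat.exists_ne_ne_of_three_le hβ x.2 y.2
  exact ⟨(a, b), by simp [hax.symm, hbx.symm], by simp [hay, hby]⟩

lemma directProd_top_exists_adj_ne_not_adj (hβ : 3 ≤ ENat.card β) {x y : α × β}
    (hxy : (DirectProd (⊤ : SimpleGraph α) (⊤ : SimpleGraph β)).Adj x y) :
    ∃ w, (DirectProd (⊤ : SimpleGraph α) (⊤ : SimpleGraph β)).Adj x w ∧ w ≠ y ∧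
      ¬(DirectProd (⊤ : SimpleGraph α) (⊤ : SimpleGraph β)).Adj y w := by
  obtain ⟨e, hex, hey⟩ := ENat.exists_ne_ne_of_three_le hβ x.2 y.2
  refine ⟨(y.1, e), ?_, fun h => hey (congrArg Prod.snd h), by simp⟩
  simp only [directProd_top_adj] at hxy ⊢
  exact ⟨hxy.1, hex.symm⟩

lemma directProd_top_exists_ne_not_adj [Nontrivial β] (x : α × β) :
    ∃ y, y ≠ x ∧ ¬(DirectProd (⊤ : SimpleGraph α) (⊤ : SimpleGraph β)).Adj y x := by
  obtain ⟨b, hb⟩ := exists_ne x.2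
  exact ⟨(x.1, b), fun h => hb (congrArg Prod.snd h), by simp⟩

theorem compl_directProd_top :
    (DirectProd (⊤ : SimpleGraph α) (⊤ : SimpleGraph β))ᶜ =
      (⊤ : SimpleGraph α) □ (⊤ : SimpleGraph β) := by
  ext x y
  simp only [compl_adj, directProd_top_adj, boxProd_adj, top_adj, Ne, Prod.ext_iff]
  tauto

end DirectProdComplete

theorem stmt14 (r t : ℕ) (hr : 3 ≤ r) (ht : 3 ≤ t) :
    Nonempty (srGraph (DirectProd (⊤ : SimpleGraph (Fin r)) (⊤ : SimpleGraph (Fin t)))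
      ≃g (⊤ : SimpleGraph (Fin r)) □ (⊤ : SimpleGraph (Fin t))) := by
  have hα : 3 ≤ ENat.card (Fin r) := by simpa using hr
  have hβ : 3 ≤ ENat.card (Fin t) := by simpa using ht
  have : Nontrivial (Fin t) := Fin.nontrivial_iff_two_le.mpr (by omega)
  have hcommon := directProd_top_exists_adj_adj hα hβ
  rw [srGraph, boundary_eq_univ hcommon directProd_top_exists_ne_not_adj,
    srGraphI_eq_compl hcommon fun _ _ => directProd_top_exists_adj_ne_not_adj hβ,
    compl_directProd_top]
  exact ⟨induceUnivIso _⟩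
end

section
/- Let G be a finite nonbipartite triangle-free graph of order n ≥ 2 such that every pair of vertices of G lies on a common cycle of length five (G is C5-connected), and let k, ℓ be positive integers with max{k,ℓ} ≥ 2. Then the strong resolving graph (G × K_{k,ℓ})_SR is isomorphic to the disjoint union of n copies of the complete graph K_{k+ℓ}; equivalently, two distinct vertices (g,u) and (g',u') of G × K_{k,ℓ} are mutually maximally distant if and only if g = g'. -/
open SimpleGraph

variable {V : Type*}

/-!
In `G × K_{k,ℓ}` a walk of length `n` is a pair of walks of length `n` in the factors, so the
distance between `(g,u)` and `(g',u')` is the least common length of a `g`–`g'` walk in `G` and a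
`u`–`u'` walk in `K_{k,ℓ}`. In `K_{k,ℓ}` the possible lengths are all `n` of the parity fixed by
the sides of `u, u'` (and `n ≠ 0` unless `u = u'`). In a triangle-free `C5`-connected graph any two
vertices are joined by walks of lengths `a, b` with `a + b = 5`, and triangle-freeness forbids
closed walks of length `1, 3` and walks of length `2` along an edge. This pins down every distance
in the product: `2` or `5` inside a fibre `{g} × K_{k,ℓ}`, `1` or `4` over an edge, `2` or `3` over
a non-edge. Two vertices in the same fibre are then MMD, while for `g ≠ g'` one always finds a
neighbour of `(g,u)` strictly farther from `(g',u')`.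
-/

open SimpleGraph

namespace SimpleGraph

def walkLengths (G : SimpleGraph V) (u v : V) : Set ℕ :=
  Set.range (Walk.length : G.Walk u v → ℕ)

section walkLengths

variable {G : SimpleGraph V} {u v w : V} {m n : ℕ}

theorem dist_eq_sInf_walkLengths : G.dist u v = sInf (G.walkLengths u v) :=
  dist_eq_sInf

theorem zero_mem_walkLengths_iff : 0 ∈ G.walkLengths u v ↔ u = v :=
  ⟨fun ⟨p, hp⟩ => Walk.eq_of_length_eq_zero hp, by rintro rfl; exact ⟨Walk.nil, rfl⟩⟩

theorem succ_mem_walkLengths_iff :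
    n + 1 ∈ G.walkLengths u v ↔ ∃ w, G.Adj u w ∧ n ∈ G.walkLengths w v := by
  constructor
  · rintro ⟨_ | ⟨h, p⟩, hp⟩
    · simp at hp
    · exact ⟨_, h, p, by simpa using hp⟩
  · rintro ⟨w, h, p, rfl⟩
    exact ⟨Walk.cons h p, rfl⟩

theorem one_mem_walkLengths_iff : 1 ∈ G.walkLengths u v ↔ G.Adj u v := by
  simp [succ_mem_walkLengths_iff, zero_mem_walkLengths_iff]

theorem two_mem_walkLengths_iff : 2 ∈ G.walkLengths u v ↔ ∃ w, G.Adj u w ∧ G.Adj w v := by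
  simp only [succ_mem_walkLengths_iff (n := 1), one_mem_walkLengths_iff]

theorem mem_walkLengths_comm : n ∈ G.walkLengths u v ↔ n ∈ G.walkLengths v u :=
  ⟨fun ⟨p, hp⟩ => ⟨p.reverse, by simpa using hp⟩, fun ⟨p, hp⟩ => ⟨p.reverse, by simpa using hp⟩⟩

theorem add_mem_walkLengths (hm : m ∈ G.walkLengths u v) (hn : n ∈ G.walkLengths v w) :
    m + n ∈ G.walkLengths u w := by
  obtain ⟨p, rfl⟩ := hm
  obtain ⟨q, rfl⟩ := hn
  exact ⟨p.append q, Walk.length_append p q⟩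

theorem add_two_mul_mem_walkLengths (hadj : G.Adj v w) (hn : n ∈ G.walkLengths u v) (j : ℕ) :
    n + 2 * j ∈ G.walkLengths u v := by
  induction j with
  | zero => exact hn
  | succ j ih =>
    rw [mul_add, mul_one, ← add_assoc]
    exact add_mem_walkLengths ih (two_mem_walkLengths_iff.2 ⟨w, hadj, hadj.symm⟩)

theorem Walk.exists_mem_walkLengths_add_eq_length {c : G.Walk w w} (hu : u ∈ c.support)
    (hv : v ∈ c.support) :
    ∃ a ∈ G.walkLengths u v, ∃ b ∈ G.walkLengths v u, a + b = c.length := by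
  classical
  have hv' : v ∈ (c.rotate u hu).support := (Walk.mem_support_rotate_iff c u hu).2 hv
  refine ⟨_, ⟨(c.rotate u hu).takeUntil v hv', rfl⟩, _, ⟨(c.rotate u hu).dropUntil v hv', rfl⟩, ?_⟩
  rw [← Walk.length_append, Walk.take_spec, Walk.length_rotate]

end walkLengths

section triangleFree

variable {G : SimpleGraph V} {a b c u v : V}

theorem CliqueFree.not_adj_of_adj_of_adj (htf : G.CliqueFree 3) (hab : G.Adj a b)
    (hbc : G.Adj b c) : ¬G.Adj a c := fun hac =>
  isIndepSet_neighborSet_of_triangleFree G htf b hab.symm hbc hac.ne hac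

theorem CliqueFree.two_notMem_walkLengths_of_adj (htf : G.CliqueFree 3) (hadj : G.Adj u v) :
    2 ∉ G.walkLengths u v := fun h2 => by
  obtain ⟨w, huw, hwv⟩ := two_mem_walkLengths_iff.1 h2
  exact htf.not_adj_of_adj_of_adj huw hwv hadj

theorem CliqueFree.three_notMem_walkLengths_self (htf : G.CliqueFree 3) :
    3 ∉ G.walkLengths v v := fun h3 => by
  obtain ⟨w, hvw, h2⟩ := succ_mem_walkLengths_iff.1 h3
  exact htf.two_notMem_walkLengths_of_adj hvw.symm h2

end triangleFree

end SimpleGraph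

section C5Connected

variable {G : SimpleGraph V} {u v : V}

theorem C5Connected.exists_mem_walkLengths_add_eq_five (hc5 : C5Connected G) (u v : V) :
    ∃ a ∈ G.walkLengths u v, ∃ b ∈ G.walkLengths u v, a + b = 5 := by
  obtain ⟨w, c, -, hlen, hu, hv⟩ := hc5 u v
  obtain ⟨a, ha, b, hb, hab⟩ := Walk.exists_mem_walkLengths_add_eq_length hu hv
  exact ⟨a, ha, b, mem_walkLengths_comm.1 hb, hab.trans hlen⟩

theorem C5Connected.five_mem_walkLengths_self (hc5 : C5Connected G) (v : V) :
    5 ∈ G.walkLengths v v := by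
  obtain ⟨a, ha, b, hb, hab⟩ := hc5.exists_mem_walkLengths_add_eq_five v v
  exact hab ▸ add_mem_walkLengths ha hb

theorem C5Connected.exists_adj (hc5 : C5Connected G) (v : V) : ∃ w, G.Adj v w := by
  obtain ⟨w, hvw, -⟩ := succ_mem_walkLengths_iff.1 (hc5.five_mem_walkLengths_self v)
  exact ⟨w, hvw⟩

theorem C5Connected.two_mem_walkLengths_self (hc5 : C5Connected G) (v : V) :
    2 ∈ G.walkLengths v v := by
  obtain ⟨w, hvw⟩ := hc5.exists_adj v
  exact two_mem_walkLengths_iff.2 ⟨w, hvw, hvw.symm⟩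

theorem C5Connected.four_mem_walkLengths_of_adj (hc5 : C5Connected G) (htf : G.CliqueFree 3)
    (hadj : G.Adj u v) : 4 ∈ G.walkLengths u v := by
  obtain ⟨a, ha, b, hb, hab⟩ := hc5.exists_mem_walkLengths_add_eq_five u v
  have hne : ∀ n ∈ G.walkLengths u v, n ≠ 0 ∧ n ≠ 2 := fun n hn =>
    ⟨by rintro rfl; exact hadj.ne (zero_mem_walkLengths_iff.1 hn),
     by rintro rfl; exact htf.two_notMem_walkLengths_of_adj hadj hn⟩
  have := hne a ha
  have := hne b hb
  obtain rfl | rfl : a = 4 ∨ b = 4 := by omega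
  exacts [ha, hb]

theorem C5Connected.two_mem_walkLengths_and_three_mem_walkLengths (hc5 : C5Connected G)
    (hne : u ≠ v) (hnadj : ¬G.Adj u v) : 2 ∈ G.walkLengths u v ∧ 3 ∈ G.walkLengths u v := by
  obtain ⟨a, ha, b, hb, hab⟩ := hc5.exists_mem_walkLengths_add_eq_five u v
  have hlen : ∀ n ∈ G.walkLengths u v, n ≠ 0 ∧ n ≠ 1 := fun n hn =>
    ⟨by rintro rfl; exact hne (zero_mem_walkLengths_iff.1 hn),
     by rintro rfl; exact hnadj (one_mem_walkLengths_iff.1 hn)⟩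
  have := hlen a ha
  have := hlen b hb
  obtain ⟨rfl, rfl⟩ | ⟨rfl, rfl⟩ : a = 2 ∧ b = 3 ∨ a = 3 ∧ b = 2 := by omega
  exacts [⟨ha, hb⟩, ⟨hb, ha⟩]

theorem C5Connected.exists_adj_ne_not_adj (hc5 : C5Connected G) (htf : G.CliqueFree 3)
    (hne : u ≠ v) : ∃ w, G.Adj u w ∧ w ≠ v ∧ ¬G.Adj w v := by
  by_cases hadj : G.Adj u v
  · obtain ⟨w, huw, h3⟩ := succ_mem_walkLengths_iff.1 (hc5.four_mem_walkLengths_of_adj htf hadj)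
    refine ⟨w, huw, ?_, htf.not_adj_of_adj_of_adj huw.symm hadj⟩
    rintro rfl
    exact htf.three_notMem_walkLengths_self h3
  · obtain ⟨w, huw, h2⟩ :=
      succ_mem_walkLengths_iff.1 (hc5.two_mem_walkLengths_and_three_mem_walkLengths hne hadj).2
    refine ⟨w, huw, ?_, fun hwv => htf.two_notMem_walkLengths_of_adj hwv h2⟩
    rintro rfl
    exact hadj huw

end C5Connected

namespace SimpleGraph

variable {W α β : Type*}

section completeBipartiteGraph

variable {u v : α ⊕ β} {n : ℕ}

theorem completeBipartiteGraph_adj_iff :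
    (completeBipartiteGraph α β).Adj u v ↔ u.isLeft ≠ v.isLeft := by
  cases u <;> cases v <;> simp

theorem even_length_completeBipartiteGraph_iff (p : (completeBipartiteGraph α β).Walk u v) :
    Even p.length ↔ u.isLeft = v.isLeft := by
  induction p with
  | nil => simp
  | @cons a b c h p ih =>
    rw [Walk.length_cons, Nat.even_add_one, ih]
    have := completeBipartiteGraph_adj_iff.1 h
    grind

theorem exists_isLeft_ne [Nonempty α] [Nonempty β] (u : α ⊕ β) :
    ∃ x : α ⊕ β, x.isLeft ≠ u.isLeft := by
  cases u
  exacts [⟨.inr (Classical.arbitrary β), by simp⟩, ⟨.inl (Classical.arbitrary α), by simp⟩]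

theorem mem_walkLengths_completeBipartiteGraph_iff [Nonempty α] [Nonempty β] :
    n ∈ (completeBipartiteGraph α β).walkLengths u v ↔
      (Even n ↔ u.isLeft = v.isLeft) ∧ (n = 0 → u = v) := by
  constructor
  · rintro ⟨p, rfl⟩
    exact ⟨even_length_completeBipartiteGraph_iff p, Walk.eq_of_length_eq_zero⟩
  rintro ⟨hpar, h0⟩
  obtain ⟨x, hx⟩ := exists_isLeft_ne u
  rcases Nat.even_or_odd' n with ⟨j, rfl | rfl⟩
  · obtain ⟨⟩ | j := j
    · exact zero_mem_walkLengths_iff.2 (h0 rfl)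
    have hs : u.isLeft = v.isLeft := hpar.1 (even_two_mul _)
    have hvx : (completeBipartiteGraph α β).Adj v x := completeBipartiteGraph_adj_iff.2 (by grind)
    have h2 := two_mem_walkLengths_iff.2 ⟨x, completeBipartiteGraph_adj_iff.2 hx.symm, hvx.symm⟩
    convert add_two_mul_mem_walkLengths hvx h2 j using 1
    ring
  · have huv : (completeBipartiteGraph α β).Adj u v :=
      completeBipartiteGraph_adj_iff.2 fun hs => Nat.not_even_two_mul_add_one j (hpar.2 hs)
    convert add_two_mul_mem_walkLengths huv.symm (one_mem_walkLengths_iff.2 huv) j using 1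
    ring

end completeBipartiteGraph

section DirectProd

variable {G : SimpleGraph V} {H : SimpleGraph W}

theorem walkLengths_directProd (x y : V × W) :
    (DirectProd G H).walkLengths x y = G.walkLengths x.1 y.1 ∩ H.walkLengths x.2 y.2 := by
  ext n
  induction n generalizing x with
  | zero => simp [zero_mem_walkLengths_iff, Prod.ext_iff]
  | succ n ih =>
    simp only [Set.mem_inter_iff, succ_mem_walkLengths_iff, ih]
    constructor
    · rintro ⟨z, ⟨h1, h2⟩, hz1, hz2⟩
      exact ⟨⟨z.1, h1, hz1⟩, ⟨z.2, h2, hz2⟩⟩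
    · rintro ⟨⟨a, ha, hna⟩, ⟨b, hb, hnb⟩⟩
      exact ⟨(a, b), ⟨ha, hb⟩, hna, hnb⟩

theorem dist_directProd_eq {x y : V × W} {m : ℕ} (hG : m ∈ G.walkLengths x.1 y.1)
    (hH : m ∈ H.walkLengths x.2 y.2)
    (hmin : ∀ n < m, n ∈ G.walkLengths x.1 y.1 → n ∉ H.walkLengths x.2 y.2) :
    (DirectProd G H).dist x y = m := by
  rw [dist_eq_sInf_walkLengths, walkLengths_directProd]
  exact IsLeast.csInf_eq ⟨⟨hG, hH⟩, fun n ⟨hnG, hnH⟩ => not_lt.1 fun h => hmin n h hnG hnH⟩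

end DirectProd

section DirectProdCompleteBipartite

variable [Nonempty α] [Nonempty β] {G : SimpleGraph V} {g g' : V} {u u' : α ⊕ β}

local notation "P" => DirectProd G (completeBipartiteGraph α β)

theorem dist_directProd_self_of_isLeft_eq (hc5 : C5Connected G) (hu : u ≠ u')
    (hs : u.isLeft = u'.isLeft) : (P).dist (g, u) (g, u') = 2 := by
  refine dist_directProd_eq (hc5.two_mem_walkLengths_self g)
    (mem_walkLengths_completeBipartiteGraph_iff.2 ⟨by simp [hs], by simp⟩) ?_
  intro n hn _ hH
  obtain ⟨hpar, h0⟩ := mem_walkLengths_completeBipartiteGraph_iff.1 hH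
  interval_cases n
  · exact hu (h0 rfl)
  · exact absurd (hpar.2 hs) (by decide)

theorem dist_directProd_self_of_isLeft_ne (hc5 : C5Connected G) (htf : G.CliqueFree 3)
    (hs : u.isLeft ≠ u'.isLeft) : (P).dist (g, u) (g, u') = 5 := by
  refine dist_directProd_eq (hc5.five_mem_walkLengths_self g)
    (mem_walkLengths_completeBipartiteGraph_iff.2 ⟨by simp [hs, Nat.even_iff], by simp⟩) ?_
  intro n hn hG hH
  obtain ⟨hpar, -⟩ := mem_walkLengths_completeBipartiteGraph_iff.1 hH
  interval_cases n
  · exact hs (hpar.1 (by decide))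
  · exact G.irrefl (one_mem_walkLengths_iff.1 hG)
  · exact hs (hpar.1 (by decide))
  · exact htf.three_notMem_walkLengths_self hG
  · exact hs (hpar.1 (by decide))

theorem dist_directProd_of_adj_of_isLeft_eq (hc5 : C5Connected G) (htf : G.CliqueFree 3)
    (hadj : G.Adj g g') (hs : u.isLeft = u'.isLeft) : (P).dist (g, u) (g', u') = 4 := by
  refine dist_directProd_eq (hc5.four_mem_walkLengths_of_adj htf hadj)
    (mem_walkLengths_completeBipartiteGraph_iff.2 ⟨by simp [hs, Nat.even_iff], by simp⟩) ?_
  intro n hn hG hH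
  obtain ⟨hpar, -⟩ := mem_walkLengths_completeBipartiteGraph_iff.1 hH
  interval_cases n
  · exact hadj.ne (zero_mem_walkLengths_iff.1 hG)
  · exact absurd (hpar.2 hs) (by decide)
  · exact htf.two_notMem_walkLengths_of_adj hadj hG
  · exact absurd (hpar.2 hs) (by decide)

theorem dist_directProd_of_not_adj_of_isLeft_eq (hc5 : C5Connected G) (hne : g ≠ g')
    (hnadj : ¬G.Adj g g') (hs : u.isLeft = u'.isLeft) : (P).dist (g, u) (g', u') = 2 := by
  refine dist_directProd_eq (hc5.two_mem_walkLengths_and_three_mem_walkLengths hne hnadj).1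
    (mem_walkLengths_completeBipartiteGraph_iff.2 ⟨by simp [hs], by simp⟩) ?_
  intro n hn hG _
  interval_cases n
  · exact hne (zero_mem_walkLengths_iff.1 hG)
  · exact hnadj (one_mem_walkLengths_iff.1 hG)

theorem dist_directProd_of_not_adj_of_isLeft_ne (hc5 : C5Connected G) (hne : g ≠ g')
    (hnadj : ¬G.Adj g g') (hs : u.isLeft ≠ u'.isLeft) : (P).dist (g, u) (g', u') = 3 := by
  refine dist_directProd_eq (hc5.two_mem_walkLengths_and_three_mem_walkLengths hne hnadj).2
    (mem_walkLengths_completeBipartiteGraph_iff.2 ⟨by simp [hs, Nat.even_iff], by simp⟩) ?_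
  intro n hn hG hH
  obtain ⟨hpar, -⟩ := mem_walkLengths_completeBipartiteGraph_iff.1 hH
  interval_cases n
  · exact hs (hpar.1 (by decide))
  · exact hnadj (one_mem_walkLengths_iff.1 hG)
  · exact hs (hpar.1 (by decide))

theorem maxDistant_directProd_of_fst_eq (hc5 : C5Connected G) (htf : G.CliqueFree 3)
    (hu : u ≠ u') : MaxDistant P (g, u) (g, u') := by
  rintro ⟨w, x⟩ ⟨hgw, hux⟩
  rw [completeBipartiteGraph_adj_iff] at hux
  by_cases hs : u.isLeft = u'.isLeft
  · have hadj : (P).Adj (g, u') (w, x) := ⟨hgw, completeBipartiteGraph_adj_iff.2 (hs ▸ hux)⟩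
    rw [dist_eq_one_iff_adj.2 hadj, dist_directProd_self_of_isLeft_eq hc5 hu.symm hs.symm]
    norm_num
  · rw [dist_directProd_of_adj_of_isLeft_eq hc5 htf hgw (by grind),
      dist_directProd_self_of_isLeft_ne hc5 htf (Ne.symm hs)]
    norm_num

theorem not_maxDistant_directProd_of_fst_ne (hc5 : C5Connected G) (htf : G.CliqueFree 3)
    (hg : g ≠ g') : ¬MaxDistant P (g, u) (g', u') := by
  suffices ∃ z, (P).Adj (g, u) z ∧ (P).dist (g', u') (g, u) < (P).dist (g', u') z by
    obtain ⟨z, hz, hlt⟩ := this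
    exact fun h => (h z hz).not_gt hlt
  obtain ⟨x, hx⟩ := exists_isLeft_ne u
  have hgx : (completeBipartiteGraph α β).Adj u x := completeBipartiteGraph_adj_iff.2 hx.symm
  obtain ⟨c, hgc, hcg', hncg'⟩ := hc5.exists_adj_ne_not_adj htf hg
  by_cases hadj : G.Adj g g' <;> by_cases hs : u.isLeft = u'.isLeft
  · refine ⟨(g', x), ⟨hadj, hgx⟩, ?_⟩
    rw [dist_directProd_of_adj_of_isLeft_eq hc5 htf hadj.symm hs.symm,
      dist_directProd_self_of_isLeft_ne hc5 htf (by grind)]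
    norm_num
  · have h1 : (P).Adj (g', u') (g, u) := ⟨hadj.symm, completeBipartiteGraph_adj_iff.2 (Ne.symm hs)⟩
    refine ⟨(c, u'), ⟨hgc, completeBipartiteGraph_adj_iff.2 hs⟩, ?_⟩
    rw [dist_eq_one_iff_adj.2 h1,
      dist_directProd_of_not_adj_of_isLeft_eq hc5 hcg'.symm (fun h => hncg' h.symm) rfl]
    norm_num
  · refine ⟨(c, x), ⟨hgc, hgx⟩, ?_⟩
    rw [dist_directProd_of_not_adj_of_isLeft_eq hc5 hg.symm (fun h => hadj h.symm) hs.symm,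
      dist_directProd_of_not_adj_of_isLeft_ne hc5 hcg'.symm (fun h => hncg' h.symm) (by grind)]
    norm_num
  · obtain ⟨m, hgm, hmg'⟩ :=
      two_mem_walkLengths_iff.1 (hc5.two_mem_walkLengths_and_three_mem_walkLengths hg hadj).1
    refine ⟨(m, u'), ⟨hgm, completeBipartiteGraph_adj_iff.2 hs⟩, ?_⟩
    rw [dist_directProd_of_not_adj_of_isLeft_ne hc5 hg.symm (fun h => hadj h.symm) (Ne.symm hs),
      dist_directProd_of_adj_of_isLeft_eq hc5 htf hmg'.symm rfl]
    norm_num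

theorem mmd_directProd_iff (hc5 : C5Connected G) (htf : G.CliqueFree 3)
    {x y : V × (α ⊕ β)} (hne : x ≠ y) : MMD P x y ↔ x.1 = y.1 := by
  obtain ⟨g, u⟩ := x
  obtain ⟨g', u'⟩ := y
  constructor
  · intro h
    by_contra hg
    exact not_maxDistant_directProd_of_fst_ne hc5 htf hg h.1
  rintro (rfl : g = g')
  have hu : u ≠ u' := fun h => hne (h ▸ rfl)
  exact ⟨maxDistant_directProd_of_fst_eq hc5 htf hu,
    maxDistant_directProd_of_fst_eq hc5 htf hu.symm⟩

theorem srGraphI_directProd_adj_iff (hc5 : C5Connected G) (htf : G.CliqueFree 3)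
    {x y : V × (α ⊕ β)} : (srGraphI P).Adj x y ↔ x.1 = y.1 ∧ x.2 ≠ y.2 := by
  refine ⟨fun ⟨hne, h⟩ => ?_, fun ⟨h1, h2⟩ => ?_⟩
  · have h1 := (mmd_directProd_iff hc5 htf hne).1 h
    exact ⟨h1, fun h2 => hne (Prod.ext h1 h2)⟩
  · have hne : x ≠ y := fun h => h2 (congrArg Prod.snd h)
    exact ⟨hne, (mmd_directProd_iff hc5 htf hne).2 h1⟩

theorem boundary_directProd_eq_univ (hc5 : C5Connected G) (htf : G.CliqueFree 3) :
    boundary P = Set.univ := by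
  refine Set.eq_univ_of_forall fun ⟨g, u⟩ => ?_
  obtain ⟨x, hx⟩ := exists_isLeft_ne u
  exact ⟨(g, x), maxDistant_directProd_of_fst_eq hc5 htf fun h => hx (h ▸ rfl)⟩

end DirectProdCompleteBipartite

theorem nonempty_srGraph_iso_of_boundary_eq_univ {G : SimpleGraph V}
    (h : boundary G = Set.univ) : Nonempty (srGraph G ≃g srGraphI G) := by
  unfold srGraph
  rw [h]
  exact ⟨induceUnivIso _⟩

theorem nonempty_iso_copiesComplete {n m : ℕ} {Γ : SimpleGraph (V × W)}
    (hΓ : ∀ x y, Γ.Adj x y ↔ x.1 = y.1 ∧ x.2 ≠ y.2) (e₁ : V ≃ Fin n) (e₂ : W ≃ Fin m) :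
    Nonempty (Γ ≃g CopiesComplete n m) :=
  ⟨{ toEquiv := e₁.prodCongr e₂
     map_rel_iff' := by simp [CopiesComplete, hΓ] }⟩

end SimpleGraph

theorem stmt16_general [Fintype V] (G : SimpleGraph V)
    (htf : G.CliqueFree 3) (hc5 : C5Connected G)
    (k l : ℕ) (hk : 1 ≤ k) (hl : 1 ≤ l) :
    Nonempty (srGraph (DirectProd G (completeBipartiteGraph (Fin k) (Fin l)))
        ≃g CopiesComplete (Fintype.card V) (k + l)) ∧
    (∀ (g g' : V) (u u' : Fin k ⊕ Fin l), (g, u) ≠ (g', u') →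
      (MMD (DirectProd G (completeBipartiteGraph (Fin k) (Fin l))) (g, u) (g', u') ↔
        g = g')) := by
  have : Nonempty (Fin k) := Fin.pos_iff_nonempty.1 hk
  have : Nonempty (Fin l) := Fin.pos_iff_nonempty.1 hl
  obtain ⟨e⟩ := nonempty_srGraph_iso_of_boundary_eq_univ
    (boundary_directProd_eq_univ (α := Fin k) (β := Fin l) hc5 htf)
  obtain ⟨f⟩ := nonempty_iso_copiesComplete
    (fun _ _ => srGraphI_directProd_adj_iff (α := Fin k) (β := Fin l) hc5 htf)
    (Fintype.equivFin V) finSumFinEquiv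
  exact ⟨⟨e.trans f⟩, fun g g' u u' hne => mmd_directProd_iff hc5 htf hne⟩

theorem stmt16 [Fintype V] (G : SimpleGraph V) (hn : 2 ≤ Fintype.card V)
    (hnb : ¬ G.Colorable 2) (htf : G.CliqueFree 3) (hc5 : C5Connected G)
    (k l : ℕ) (hk : 1 ≤ k) (hl : 1 ≤ l) (hkl : 2 ≤ max k l) :
    Nonempty (srGraph (DirectProd G (completeBipartiteGraph (Fin k) (Fin l)))
        ≃g CopiesComplete (Fintype.card V) (k + l)) ∧
    (∀ (g g' : V) (u u' : Fin k ⊕ Fin l), (g, u) ≠ (g', u') →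
      (MMD (DirectProd G (completeBipartiteGraph (Fin k) (Fin l))) (g, u) (g', u') ↔
        g = g')) :=
  stmt16_general G htf hc5 k l hk hl
end

section
/- Let G and H be finite connected graphs each with at least two vertices, and let G_{SR+I} (resp. H_{SR+I}) denote the graph on vertex set V(G) (resp. V(H)) in which two vertices are adjacent if and only if they are mutually maximally distant in G (resp. in H). Then for all vertices (u,v), (x,y) of V(G) × V(H): (i) if (u,v) and (x,y) are adjacent in the strong product G_{SR+I} ⊠ H_{SR+I}, then (u,v) and (x,y) are mutually maximally distant in the strong product G ⊠ H; and (ii) if (u,v) and (x,y) are mutually maximally distant in G ⊠ H, then (u,v) and (x,y) are adjacent in the Cartesian sum G_{SR+I} ⊕ H_{SR+I}. That is, G_{SR+I} ⊠ H_{SR+I} is a subgraph of (G ⊠ H)_{SR+I}, which is a subgraph of G_{SR+I} ⊕ H_{SR+I}. -/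
open SimpleGraph

variable {V : Type*}

/-! In `G ⊠ H` the distance is the maximum of the coordinate distances. For (i): a neighbour of
`(u, v)` moves each coordinate by at most one step, and when `u = x` or `u` is maximally distant
from `x` this keeps the first-coordinate distance to `x` at most `max (d(x, u)) 1`; since
`(u, v) ≠ (x, y)`, the maximum over both coordinates cannot grow. For (ii): if, say,
`d(v, y) ≤ d(u, x)`, the product distance is `d(u, x)`, and moving only the first coordinate of
`(u, v)` or of `(x, y)` shows that `u` and `x` are mutually maximally distant in `G`. -/

lemma SimpleGraph.dist_le_one_of_eq_or_adj {G : SimpleGraph V} {u w : V} (h : u = w ∨ G.Adj u w) :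
    G.dist u w ≤ 1 := by
  rcases h with rfl | h
  · simp
  · exact (dist_eq_one_iff_adj.2 h).le

lemma SimpleGraph.Walk.dist_le_length_of_dist_le_one {W : Type*} {G : SimpleGraph V}
    {G' : SimpleGraph W} (hG' : G'.Connected) {f : V → W}
    (hf : ∀ ⦃x y⦄, G.Adj x y → G'.dist (f x) (f y) ≤ 1)
    {x y : V} (r : G.Walk x y) : G'.dist (f x) (f y) ≤ r.length := by
  induction r with
  | nil => simp
  | @cons x z y h r ih =>
    rw [Walk.length_cons]
    linarith [hG'.dist_triangle (u := f x) (v := f z) (w := f y), hf h]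

namespace StrongProd

variable {α β : Type*} {G : SimpleGraph α} {H : SimpleGraph β}

lemma adj_of_adj_left {a a' : α} (h : G.Adj a a') (b : β) :
    (StrongProd G H).Adj (a, b) (a', b) :=
  ⟨by simp [h.ne], Or.inr h, Or.inl rfl⟩

lemma adj_of_adj_right (a : α) {b b' : β} (h : H.Adj b b') :
    (StrongProd G H).Adj (a, b) (a, b') :=
  ⟨by simp [h.ne], Or.inl rfl, Or.inr h⟩

lemma adj_of_adj_of_adj {a a' : α} {b b' : β} (h : G.Adj a a') (h' : H.Adj b b') :
    (StrongProd G H).Adj (a, b) (a', b') :=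
  ⟨by simp [h.ne], Or.inr h, Or.inr h'⟩

variable (G) in
def inr (a : α) : H →g StrongProd G H where
  toFun := Prod.mk a
  map_rel' h := adj_of_adj_right a h

lemma dist_fst_le_one ⦃x y : α × β⦄ (h : (StrongProd G H).Adj x y) : G.dist x.1 y.1 ≤ 1 :=
  dist_le_one_of_eq_or_adj h.2.1

lemma dist_snd_le_one ⦃x y : α × β⦄ (h : (StrongProd G H).Adj x y) : H.dist x.2 y.2 ≤ 1 :=
  dist_le_one_of_eq_or_adj h.2.2

lemma exists_walk_length_eq_max {a c : α} {b d : β} (p : G.Walk a c) (q : H.Walk b d) :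
    ∃ r : (StrongProd G H).Walk (a, b) (c, d), r.length = max p.length q.length := by
  induction p generalizing b with
  | nil => exact ⟨q.map (inr G _), (Walk.length_map _ _).trans (by simp)⟩
  | cons h p ih =>
    cases q with
    | nil =>
      obtain ⟨r, hr⟩ := ih Walk.nil
      exact ⟨.cons (adj_of_adj_left h _) r, by simp [hr]⟩
    | cons h' q =>
      obtain ⟨r, hr⟩ := ih q
      exact ⟨.cons (adj_of_adj_of_adj h h') r, by simp [hr, Nat.succ_max_succ]⟩

end StrongProd

section

variable {α β : Type*} {G : SimpleGraph α} {H : SimpleGraph β}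

theorem dist_strongProd (hG : G.Connected) (hH : H.Connected) (a c : α) (b d : β) :
    (StrongProd G H).dist (a, b) (c, d) = max (G.dist a c) (H.dist b d) := by
  obtain ⟨p, hp⟩ := hG.exists_walk_length_eq_dist a c
  obtain ⟨q, hq⟩ := hH.exists_walk_length_eq_dist b d
  obtain ⟨r, hr⟩ := StrongProd.exists_walk_length_eq_max p q
  obtain ⟨s, hs⟩ := r.reachable.exists_walk_length_eq_dist
  refine le_antisymm (hp ▸ hq ▸ hr ▸ dist_le r) ?_
  rw [← hs]
  exact max_le (s.dist_le_length_of_dist_le_one hG StrongProd.dist_fst_le_one)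
    (s.dist_le_length_of_dist_le_one hH StrongProd.dist_snd_le_one)

lemma dist_le_max_one_of_maxDistant {u w x : α} (h : u = x ∨ MaxDistant G u x)
    (hw : u = w ∨ G.Adj u w) : G.dist x w ≤ max (G.dist x u) 1 := by
  rcases hw with rfl | hw
  · exact le_max_left _ _
  rcases h with rfl | h
  · exact le_max_of_le_right (dist_le_one_of_eq_or_adj (.inr hw))
  · exact le_max_of_le_left (h w hw)

lemma maxDistant_strongProd (hG : G.Connected) (hH : H.Connected) {u x : α} {v y : β}
    (hux : u = x ∨ MaxDistant G u x) (hvy : v = y ∨ MaxDistant H v y) (hne : (u, v) ≠ (x, y)) :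
    MaxDistant (StrongProd G H) (u, v) (x, y) := by
  rintro ⟨w, z⟩ ⟨-, hw, hz⟩
  dsimp only at hw hz
  have hpos : 0 < G.dist x u ∨ 0 < H.dist y v := by
    have : u ≠ x ∨ v ≠ y := by rwa [Ne, Prod.mk.injEq, not_and_or] at hne
    exact this.imp (fun h => hG.pos_dist_of_ne h.symm) (fun h => hH.pos_dist_of_ne h.symm)
  rw [dist_strongProd hG hH, dist_strongProd hG hH]
  have hw' := dist_le_max_one_of_maxDistant hux hw
  have hz' := dist_le_max_one_of_maxDistant hvy hz
  omega

lemma mmd_strongProd (hG : G.Connected) (hH : H.Connected) {u x : α} {v y : β}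
    (hux : u = x ∨ MMD G u x) (hvy : v = y ∨ MMD H v y) (hne : (u, v) ≠ (x, y)) :
    MMD (StrongProd G H) (u, v) (x, y) :=
  ⟨maxDistant_strongProd hG hH (hux.imp_right And.left) (hvy.imp_right And.left) hne,
    maxDistant_strongProd hG hH (hux.imp Eq.symm And.right) (hvy.imp Eq.symm And.right) hne.symm⟩

lemma MaxDistant.of_strongProd_left (hG : G.Connected) (hH : H.Connected) {u x : α} {v y : β}
    (h : MaxDistant (StrongProd G H) (u, v) (x, y)) (hle : H.dist y v ≤ G.dist x u) :
    MaxDistant G u x := by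
  intro w hw
  have := h _ (StrongProd.adj_of_adj_left hw v)
  rw [dist_strongProd hG hH, dist_strongProd hG hH] at this
  omega

lemma MaxDistant.of_strongProd_right (hG : G.Connected) (hH : H.Connected) {u x : α} {v y : β}
    (h : MaxDistant (StrongProd G H) (u, v) (x, y)) (hle : G.dist x u ≤ H.dist y v) :
    MaxDistant H v y := by
  intro w hw
  have := h _ (StrongProd.adj_of_adj_right u hw)
  rw [dist_strongProd hG hH, dist_strongProd hG hH] at this
  omega

theorem strongProd_srGraphI_le_srGraphI_strongProd (hG : G.Connected) (hH : H.Connected) :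
    StrongProd (srGraphI G) (srGraphI H) ≤ srGraphI (StrongProd G H) := by
  rintro ⟨u, v⟩ ⟨x, y⟩ ⟨hne, hux, hvy⟩
  exact ⟨hne, mmd_strongProd hG hH (hux.imp_right And.right) (hvy.imp_right And.right) hne⟩

theorem srGraphI_strongProd_le_cartSum (hG : G.Connected) (hH : H.Connected) :
    srGraphI (StrongProd G H) ≤ CartSum (srGraphI G) (srGraphI H) := by
  rintro ⟨u, v⟩ ⟨x, y⟩ ⟨hne, h, h'⟩
  rcases le_total (H.dist v y) (G.dist u x) with hle | hle
  · have hux : u ≠ x := by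
      rintro rfl
      exact hne (by simpa [hH.dist_eq_zero_iff] using hle)
    refine .inl ⟨hux, h.of_strongProd_left hG hH ?_, h'.of_strongProd_left hG hH hle⟩
    rwa [dist_comm, G.dist_comm]
  · have hvy : v ≠ y := by
      rintro rfl
      exact hne (by simpa [hG.dist_eq_zero_iff] using hle)
    refine .inr ⟨hvy, h.of_strongProd_right hG hH ?_, h'.of_strongProd_right hG hH hle⟩
    rwa [dist_comm, H.dist_comm]

end

theorem stmt18_general {α β : Type*}
    (G : SimpleGraph α) (H : SimpleGraph β)
    (hG : G.Connected) (hH : H.Connected) :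
    StrongProd (srGraphI G) (srGraphI H) ≤ srGraphI (StrongProd G H) ∧
      srGraphI (StrongProd G H) ≤ CartSum (srGraphI G) (srGraphI H) :=
  ⟨strongProd_srGraphI_le_srGraphI_strongProd hG hH, srGraphI_strongProd_le_cartSum hG hH⟩

theorem stmt18 {α β : Type*} [Fintype α] [Fintype β]
    (G : SimpleGraph α) (H : SimpleGraph β)
    (hG : G.Connected) (hH : H.Connected)
    (h2G : 2 ≤ Fintype.card α) (h2H : 2 ≤ Fintype.card β) :
    StrongProd (srGraphI G) (srGraphI H) ≤ srGraphI (StrongProd G H) ∧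
      srGraphI (StrongProd G H) ≤ CartSum (srGraphI G) (srGraphI H) :=
  stmt18_general G H hG hH
end
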